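/- Let (x*, w*, y*) be an optimal solution of the DH relaxation. Then M¹(w*) + M²(x*) ≥ (1 − 1/e) · max{ M¹(w) + M²(x) : (x, w) ∈ R¹ }. In words, the first-period decisions produced by the Dating Heuristic (the integral optimal solution of the relaxation), followed by optimal second-period responses, guarantee at least a 1 − 1/e fraction of the optimal expected number of matches of the two-period problem with two-directional interactions and non-sequential matches allowed in the first period. -/

import Mathlib

open scoped Classical
noncomputable section

/-- The set of directed arcs between the two sides `I` and `J`. -/
abbrev Arc (I J : Type*) := (I × J) ⊕ (J × I)

/-- Reversal of a directed arc. -/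
def arcRev {I J : Type*} : Arc I J → Arc I J
  | Sum.inl (i, j) => Sum.inr (j, i)
  | Sum.inr (j, i) => Sum.inl (i, j)

/-- Source (tail) of a directed arc. -/
def arcSrc {I J : Type*} : Arc I J → I ⊕ J
  | Sum.inl (i, _) => Sum.inl i
  | Sum.inr (j, _) => Sum.inr j

/-- Out-degree of a user in a set of arcs. -/
def outdegX {I J : Type*} (X : Finset (Arc I J)) (l : I ⊕ J) : ℕ :=
  (X.filter fun a => arcSrc a = l).card

/-- Number of displayed unordered pairs containing a given user. -/
def wdeg {I J : Type*} (W : Finset (I × J)) : I ⊕ J → ℕ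
  | Sum.inl i => (W.filter fun e => e.1 = i).card
  | Sum.inr j => (W.filter fun e => e.2 = j).card

/-- `max { ∑_{x ∈ S} φ x : S ⊆ s, |S| ≤ K }`. -/
def bestSum {α : Type*} (s : Finset α) (K : ℕ) (φ : α → ℝ) : ℝ :=
  (s.powerset.filter fun S => S.card ≤ K).sup' ⟨∅, by simp⟩ fun S => ∑ x ∈ S, φ x

/-- Backlog of a user `i ∈ I` in a set of arcs `B`. -/
def backlogI {I J : Type*} [Fintype J] (B : Finset (Arc I J)) (i : I) : Finset J :=
  Finset.univ.filter fun j => Sum.inr (j, i) ∈ B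

/-- Backlog of a user `j ∈ J` in a set of arcs `B`. -/
def backlogJ {I J : Type*} [Fintype I] (B : Finset (Arc I J)) (j : J) : Finset I :=
  Finset.univ.filter fun i => Sum.inl (i, j) ∈ B

/-- The second-period (sequential) value function `f`. -/
def fval {I J : Type*} [Fintype I] [Fintype J] (φ2 : Arc I J → ℝ) (K : I ⊕ J → ℕ)
    (B : Finset (Arc I J)) : ℝ :=
  (∑ i : I, bestSum (backlogI B i) (K (Sum.inl i)) fun j => φ2 (Sum.inl (i, j))) +
  ∑ j : J, bestSum (backlogJ B j) (K (Sum.inr j)) fun i => φ2 (Sum.inr (j, i))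

/-- Probability that the realized backlog is exactly `B`, given displayed arcs `x`. -/
def probOf {I J : Type*} [Fintype I] [Fintype J] (φ1 : Arc I J → ℝ)
    (x : Finset (Arc I J)) (B : Finset (Arc I J)) : ℝ :=
  (∏ a ∈ B, (if a ∈ x then φ1 a else 0)) *
    ∏ a ∈ Bᶜ, (1 - if a ∈ x then φ1 a else 0)

/-- Expected number of second-period (sequential) matches. -/
def M2 {I J : Type*} [Fintype I] [Fintype J] (φ1 φ2 : Arc I J → ℝ) (K : I ⊕ J → ℕ)
    (x : Finset (Arc I J)) : ℝ :=
  ∑ B : Finset (Arc I J), fval φ2 K B * probOf φ1 x B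

/-- Sum, over the arcs leaving a given user, of a vector indexed by arcs. -/
def outSumF {I J : Type*} [Fintype I] [Fintype J] (y : Arc I J → ℝ) : I ⊕ J → ℝ
  | Sum.inl i => ∑ j, y (Sum.inl (i, j))
  | Sum.inr j => ∑ i, y (Sum.inr (j, i))

/-- Expected number of non-sequential first-period matches. -/
def M1 {I J : Type*} [Fintype I] [Fintype J] (φ1 : Arc I J → ℝ)
    (w : Finset (I × J)) : ℝ :=
  ∑ e ∈ w, φ1 (Sum.inl e) * φ1 (Sum.inr (e.2, e.1))

/-- The general first-period feasible region `R¹` (two-directional interactions,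
non-sequential matches allowed in the first period). -/
def R1mem {I J : Type*} [Fintype I] [Fintype J] (K : I ⊕ J → ℕ)
    (x : Finset (Arc I J)) (w : Finset (I × J)) : Prop :=
  (∀ (i : I) (j : J),
    ((if (Sum.inl (i, j) : Arc I J) ∈ x then 1 else 0) +
      (if (Sum.inr (j, i) : Arc I J) ∈ x then 1 else 0) +
      (if (i, j) ∈ w then (1 : ℕ) else 0)) ≤ 1) ∧
  ∀ l : I ⊕ J, outdegX x l + wdeg w l ≤ K l

/-- Feasibility for the DH relaxation. -/
def DHfeas {I J : Type*} [Fintype I] [Fintype J] (φ1 : Arc I J → ℝ) (K : I ⊕ J → ℕ)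
    (x : Finset (Arc I J)) (w : Finset (I × J)) (y : Arc I J → ℝ) : Prop :=
  (∀ a, 0 ≤ y a ∧ y a ≤ 1) ∧
  (∀ a, y a ≤ φ1 (arcRev a) * (if arcRev a ∈ x then 1 else 0)) ∧
  R1mem K x w ∧
  ∀ l : I ⊕ J, outSumF y l ≤ (K l : ℝ)

/-!
Relaxation: for `(x, w) ∈ R¹`, let `y_a` be the probability that the optimal second-period
response selects arc `a`; then `(x, w, y)` is DH-feasible and its second-period objective is
exactly `M²(x)`, so the DH optimum dominates the two-period optimum.

Rounding: under `x*` each user's backlog consists of independent Bernoulli arcs whose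
probabilities dominate `y*`, and the user keeps the `K` most valuable ones. Decomposing the
value vector into nonnegative multiples of indicators of nested level sets `A`, it suffices that
`E[min(|B ∩ A|, K)] ≥ (1 - 1/e) min(∑_A p, K)`. This follows from
`min(n, K) ≥ K (1 - (1 - 1/K)^n)`, the product formula for `E[λ^|B ∩ A|]`, the bound
`1 - p/K ≤ exp(-p/K)` and the concavity of `1 - exp(-t)`.
-/

section Estimates

open Real

theorem mul_one_sub_pow_le_min {K : ℝ} (hK : 1 ≤ K) (n : ℕ) :
    K * (1 - (1 - K⁻¹) ^ n) ≤ min (n : ℝ) K := by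
  have hK0 : 0 < K := by linarith
  have hq : 0 ≤ 1 - K⁻¹ := sub_nonneg.2 (inv_le_one_of_one_le₀ hK)
  have bernoulli : 1 + n * (-K⁻¹) ≤ (1 - K⁻¹) ^ n := by
    simpa [sub_eq_add_neg] using one_add_mul_le_pow (a := -K⁻¹) (by linarith) n
  refine le_min ?_ (by nlinarith [pow_nonneg hq n])
  calc K * (1 - (1 - K⁻¹) ^ n) ≤ K * (n * K⁻¹) := by gcongr; linarith
    _ = n := by field_simp

theorem one_sub_inv_exp_mul_min_le {t : ℝ} (ht : 0 ≤ t) :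
    (1 - (exp 1)⁻¹) * min t 1 ≤ 1 - exp (-t) := by
  rcases le_total t 1 with h | h
  · have hconv := convexOn_exp.2 (Set.mem_univ (0 : ℝ)) (Set.mem_univ (-1 : ℝ))
      (sub_nonneg.2 h) ht (by ring : 1 - t + t = 1)
    simp only [smul_eq_mul, mul_zero, zero_add, mul_neg, mul_one, exp_zero, exp_neg] at hconv
    rw [min_eq_left h, exp_neg]
    linarith
  · have : exp (-t) ≤ exp (-1) := exp_le_exp.2 (by linarith)
    rw [exp_neg 1] at this
    rw [min_eq_right h]
    linarith

theorem one_sub_inv_exp_one_nonneg : 0 ≤ 1 - (exp 1)⁻¹ :=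
  sub_nonneg.2 (inv_le_one_of_one_le₀ (one_le_exp zero_le_one))

end Estimates

section BernoulliProduct

open Finset

variable {α : Type*} [Fintype α] [DecidableEq α]

def bernoulliWeight (p : α → ℝ) (B : Finset α) : ℝ :=
  (∏ a ∈ B, p a) * ∏ a ∈ Bᶜ, (1 - p a)

def bernoulliExpect (p : α → ℝ) (F : Finset α → ℝ) : ℝ :=
  ∑ B, bernoulliWeight p B * F B

variable {p : α → ℝ}

theorem bernoulliWeight_nonneg (hp : ∀ a, 0 ≤ p a ∧ p a ≤ 1) (B : Finset α) :
    0 ≤ bernoulliWeight p B :=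
  mul_nonneg (prod_nonneg fun a _ => (hp a).1) (prod_nonneg fun a _ => sub_nonneg.2 (hp a).2)

theorem bernoulliExpect_prod_inter (p : α → ℝ) (A : Finset α) (g : α → ℝ) :
    bernoulliExpect p (fun B => ∏ a ∈ B ∩ A, g a) = ∏ a ∈ A, (1 - p a + p a * g a) := by
  calc bernoulliExpect p (fun B => ∏ a ∈ B ∩ A, g a)
      = ∑ B ∈ univ.powerset, (∏ a ∈ B, p a * if a ∈ A then g a else 1) *
          ∏ a ∈ univ \ B, (1 - p a) := by
        rw [powerset_univ]
        refine sum_congr rfl fun B _ => ?_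
        rw [bernoulliWeight, prod_mul_distrib, prod_ite_mem, compl_eq_univ_sdiff]
        ring
    _ = ∏ a, (p a * (if a ∈ A then g a else 1) + (1 - p a)) := (prod_add _ _ _).symm
    _ = ∏ a, if a ∈ A then 1 - p a + p a * g a else 1 :=
        prod_congr rfl fun a _ => by split_ifs <;> ring
    _ = ∏ a ∈ A, (1 - p a + p a * g a) := Fintype.prod_ite_mem A _

theorem bernoulliExpect_add (F G : Finset α → ℝ) :
    bernoulliExpect p (fun B => F B + G B) = bernoulliExpect p F + bernoulliExpect p G := by
  simp only [bernoulliExpect, mul_add, sum_add_distrib]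

theorem bernoulliExpect_sub (F G : Finset α → ℝ) :
    bernoulliExpect p (fun B => F B - G B) = bernoulliExpect p F - bernoulliExpect p G := by
  simp only [bernoulliExpect, mul_sub, sum_sub_distrib]

theorem bernoulliExpect_const_mul (c : ℝ) (F : Finset α → ℝ) :
    bernoulliExpect p (fun B => c * F B) = c * bernoulliExpect p F := by
  simp only [bernoulliExpect, mul_sum]
  exact sum_congr rfl fun B _ => by ring

theorem bernoulliExpect_sum {ι : Type*} (s : Finset ι) (F : ι → Finset α → ℝ) :
    bernoulliExpect p (fun B => ∑ i ∈ s, F i B) = ∑ i ∈ s, bernoulliExpect p (F i) := by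
  simp only [bernoulliExpect, mul_sum]
  exact sum_comm

theorem bernoulliExpect_const (p : α → ℝ) (c : ℝ) : bernoulliExpect p (fun _ => c) = c := by
  have total : bernoulliExpect p (fun _ => 1) = 1 := by
    simpa using bernoulliExpect_prod_inter p ∅ fun _ => 1
  simpa [total] using bernoulliExpect_const_mul (p := p) c fun _ => 1

theorem bernoulliExpect_mono (hp : ∀ a, 0 ≤ p a ∧ p a ≤ 1) {F G : Finset α → ℝ}
    (h : ∀ B, F B ≤ G B) : bernoulliExpect p F ≤ bernoulliExpect p G :=
  sum_le_sum fun B _ => mul_le_mul_of_nonneg_left (h B) (bernoulliWeight_nonneg hp B)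

theorem bernoulliExpect_indicator_mem (p : α → ℝ) (c : α) :
    bernoulliExpect p (fun B => if c ∈ B then 1 else 0) = p c := by
  have h := bernoulliExpect_prod_inter p {c} fun _ => 0
  have hprod : (fun B : Finset α => ∏ a ∈ B ∩ {c}, (0 : ℝ)) =
      fun B => 1 - if c ∈ B then 1 else 0 := by
    funext B
    by_cases hc : c ∈ B <;> simp [hc]
  rw [hprod, bernoulliExpect_sub, bernoulliExpect_const] at h
  simpa using h

end BernoulliProduct

section MinCard

open Finset Real

variable {α : Type*} [Fintype α] [DecidableEq α] {p : α → ℝ}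

theorem one_sub_inv_exp_mul_min_le_bernoulliExpect (hp : ∀ a, 0 ≤ p a ∧ p a ≤ 1)
    (A : Finset α) (K : ℕ) :
    (1 - (exp 1)⁻¹) * min (∑ a ∈ A, p a) K ≤
      bernoulliExpect p (fun B => min (#(B ∩ A) : ℝ) K) := by
  have hμ : 0 ≤ ∑ a ∈ A, p a := sum_nonneg fun a _ => (hp a).1
  rcases Nat.eq_zero_or_pos K with rfl | hK
  · simp [min_eq_right hμ, bernoulliExpect_const]
  have hK1 : (1 : ℝ) ≤ K := by exact_mod_cast hK
  have hK0 : (0 : ℝ) < K := by linarith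
  set q : ℝ := 1 - (K : ℝ)⁻¹
  have hprod : ∏ a ∈ A, (1 - p a + p a * q) ≤ exp (-((∑ a ∈ A, p a) / K)) := by
    rw [sum_div, ← sum_neg_distrib, exp_sum]
    refine prod_le_prod (fun a _ => ?_) fun a _ => ?_
    · nlinarith [(hp a).1, (hp a).2, inv_le_one_of_one_le₀ hK1]
    · calc 1 - p a + p a * q = -(p a / K) + 1 := by ring
        _ ≤ exp (-(p a / K)) := add_one_le_exp _
  calc (1 - (exp 1)⁻¹) * min (∑ a ∈ A, p a) K
      = K * ((1 - (exp 1)⁻¹) * min ((∑ a ∈ A, p a) / K) 1) := by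
        rw [mul_left_comm, mul_min_of_nonneg _ _ hK0.le, mul_div_cancel₀ _ hK0.ne', mul_one]
    _ ≤ K * (1 - exp (-((∑ a ∈ A, p a) / K))) := by
        gcongr; exact one_sub_inv_exp_mul_min_le (div_nonneg hμ hK0.le)
    _ ≤ K * (1 - ∏ a ∈ A, (1 - p a + p a * q)) := by gcongr
    _ = bernoulliExpect p (fun B => K * (1 - q ^ #(B ∩ A))) := by
        have h := bernoulliExpect_prod_inter p A fun _ => q
        simp only [prod_const] at h
        rw [bernoulliExpect_const_mul, bernoulliExpect_sub, bernoulliExpect_const, h]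
    _ ≤ bernoulliExpect p (fun B => min (#(B ∩ A) : ℝ) K) :=
        bernoulliExpect_mono hp fun B => mul_one_sub_pow_le_min hK1 _

end MinCard

section BestSum

open Finset

variable {β : Type*} (s : Finset β) (K : ℕ) (v : β → ℝ)

theorem sum_le_bestSum {S : Finset β} (hS : S ⊆ s) (hSK : #S ≤ K) :
    ∑ x ∈ S, v x ≤ bestSum s K v :=
  le_sup' (fun S => ∑ x ∈ S, v x) (mem_filter.2 ⟨mem_powerset.2 hS, hSK⟩)

theorem bestSum_nonneg : 0 ≤ bestSum s K v := by
  simpa using sum_le_bestSum s K v (empty_subset s) (by simp)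

theorem exists_sum_eq_bestSum : ∃ S ⊆ s, #S ≤ K ∧ ∑ x ∈ S, v x = bestSum s K v := by
  obtain ⟨S, hS, hmax⟩ := exists_mem_eq_sup' (⟨∅, by simp⟩ : (s.powerset.filter
    fun S => #S ≤ K).Nonempty) fun S => ∑ x ∈ S, v x
  rw [mem_filter, mem_powerset] at hS
  exact ⟨S, hS.1, hS.2, hmax.symm⟩

theorem bestSum_add_mul_min_le [DecidableEq β] {A : Finset β} (θ : ℝ) (hv : ∀ t, 0 ≤ v t)
    (hvA : ∀ t ∉ A, v t = 0) :
    bestSum s K v + θ * min (#(s ∩ A) : ℝ) K ≤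
      bestSum s K (fun t => v t + if t ∈ A then θ else 0) := by
  obtain ⟨S', hS's, hS'K, hS'v⟩ := exists_sum_eq_bestSum s K v
  have hsub : S' ∩ A ⊆ s ∩ A := inter_subset_inter hS's subset_rfl
  obtain ⟨S, hS'S, hSsA, hScard⟩ := exists_subsuperset_card_eq hsub
    (le_min (card_le_card hsub) ((card_le_card inter_subset_left).trans hS'K)) (min_le_left _ _)
  have hS'A : ∑ t ∈ S' ∩ A, v t = ∑ t ∈ S', v t :=
    sum_subset inter_subset_left fun t ht htA => hvA t fun h => htA (mem_inter.2 ⟨ht, h⟩)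
  calc bestSum s K v + θ * min (#(s ∩ A) : ℝ) K = ∑ t ∈ S' ∩ A, v t + ∑ t ∈ S, θ := by
        rw [hS'A, hS'v, sum_const, hScard, nsmul_eq_mul, Nat.cast_min, mul_comm]
    _ ≤ ∑ t ∈ S, v t + ∑ t ∈ S, θ :=
        add_le_add_left (sum_le_sum_of_subset_of_nonneg hS'S fun t _ _ => hv t) _
    _ = ∑ t ∈ S, (v t + if t ∈ A then θ else 0) := by
        rw [← sum_add_distrib]
        exact sum_congr rfl fun t ht => by rw [if_pos (mem_inter.1 (hSsA ht)).2]
    _ ≤ bestSum s K (fun t => v t + if t ∈ A then θ else 0) :=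
        sum_le_bestSum s K _ (hSsA.trans inter_subset_left) (hScard ▸ min_le_right _ _)

end BestSum

section Rounding

open Finset Real

variable {α ι : Type*} [Fintype α] [DecidableEq α] [Fintype ι] [DecidableEq ι] {p : α → ℝ}

-- `ι` is the set of partners of one user and `emb t` the arc from `t` to that user, so that
-- `univ.filter fun t => emb t ∈ B` is the user's backlog.
theorem exists_sum_mul_eq_bernoulliExpect_bestSum (hp : ∀ a, 0 ≤ p a ∧ p a ≤ 1)
    (emb : ι → α) (K : ℕ) (v : ι → ℝ) :
    ∃ z : ι → ℝ, (∀ t, 0 ≤ z t ∧ z t ≤ 1) ∧ (∀ t, z t ≤ p (emb t)) ∧ ∑ t, z t ≤ K ∧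
      ∑ t, v t * z t =
        bernoulliExpect p (fun B => bestSum (univ.filter fun t => emb t ∈ B) K v) := by
  choose S hSsub hSK hSv using fun B : Finset α =>
    exists_sum_eq_bestSum (univ.filter fun t => emb t ∈ B) K v
  have hind : ∀ t B, (0 : ℝ) ≤ if t ∈ S B then 1 else 0 := fun t B => by split_ifs <;> norm_num
  refine ⟨fun t => bernoulliExpect p fun B => if t ∈ S B then 1 else 0,
    fun t => ⟨?_, ?_⟩, fun t => ?_, ?_, ?_⟩
  · exact (bernoulliExpect_const p 0).symm.le.trans (bernoulliExpect_mono hp (hind t))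
  · refine (bernoulliExpect_mono hp fun B => ?_).trans (bernoulliExpect_const p 1).le
    split_ifs <;> norm_num
  · rw [← bernoulliExpect_indicator_mem p (emb t)]
    refine bernoulliExpect_mono hp fun B => ?_
    by_cases ht : t ∈ S B
    · rw [if_pos ht, if_pos (by simpa using hSsub B ht)]
    · rw [if_neg ht]
      split_ifs <;> norm_num
  · rw [← bernoulliExpect_sum, ← bernoulliExpect_const p K]
    refine bernoulliExpect_mono hp fun B => ?_
    simpa [sum_boole] using hSK B
  · simp only [← bernoulliExpect_const_mul, ← bernoulliExpect_sum, mul_ite, mul_one, mul_zero,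
      sum_ite_mem, univ_inter, hSv]

theorem one_sub_inv_exp_mul_sum_le_bernoulliExpect_min_card (hp : ∀ a, 0 ≤ p a ∧ p a ≤ 1)
    {emb : ι → α} (hemb : Function.Injective emb) {K : ℕ} {z : ι → ℝ}
    (hz : ∀ t, 0 ≤ z t) (hzp : ∀ t, z t ≤ p (emb t)) (hzK : ∑ t, z t ≤ K) (A : Finset ι) :
    (1 - (exp 1)⁻¹) * ∑ t ∈ A, z t ≤
      bernoulliExpect p (fun B => min (#((univ.filter fun t => emb t ∈ B) ∩ A) : ℝ) K) := by
  let e : ι ↪ α := ⟨emb, hemb⟩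
  have hcard : ∀ B, #((univ.filter fun t => emb t ∈ B) ∩ A) = #(B ∩ A.map e) := by
    intro B
    rw [← card_map e]
    congr 1
    ext a
    simp only [mem_map, mem_inter, mem_filter, mem_univ, true_and]
    constructor
    · rintro ⟨t, ⟨htB, htA⟩, rfl⟩
      exact ⟨htB, t, htA, rfl⟩
    · rintro ⟨haB, t, htA, rfl⟩
      exact ⟨t, ⟨haB, htA⟩, rfl⟩
  have hzA : ∑ t ∈ A, z t ≤ min (∑ a ∈ A.map e, p a) K :=
    le_min (by rw [sum_map]; exact sum_le_sum fun t _ => hzp t)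
      ((sum_le_univ_sum_of_nonneg hz).trans hzK)
  simp only [hcard]
  exact (mul_le_mul_of_nonneg_left hzA one_sub_inv_exp_one_nonneg).trans
    (one_sub_inv_exp_mul_min_le_bernoulliExpect hp _ K)

theorem one_sub_inv_exp_mul_sum_le_bernoulliExpect_bestSum (hp : ∀ a, 0 ≤ p a ∧ p a ≤ 1)
    {emb : ι → α} (hemb : Function.Injective emb) {K : ℕ} {z : ι → ℝ}
    (hz : ∀ t, 0 ≤ z t) (hzp : ∀ t, z t ≤ p (emb t)) (hzK : ∑ t, z t ≤ K)
    (v : ι → ℝ) (hv : ∀ t, 0 ≤ v t) :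
    (1 - (exp 1)⁻¹) * ∑ t, v t * z t ≤
      bernoulliExpect p (fun B => bestSum (univ.filter fun t => emb t ∈ B) K v) := by
  suffices key : ∀ A : Finset ι, (∀ t ∉ A, v t = 0) →
      (1 - (exp 1)⁻¹) * ∑ t, v t * z t ≤
        bernoulliExpect p (fun B => bestSum (univ.filter fun t => emb t ∈ B) K v) from
    key univ fun t ht => absurd (mem_univ t) ht
  intro A hvA
  induction A using Finset.strongInduction generalizing v with
  | H A ih =>
  rcases A.eq_empty_or_nonempty with rfl | hA
  · have hv0 : ∀ t, v t = 0 := fun t => hvA t (notMem_empty t)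
    simp only [hv0, zero_mul, sum_const_zero, mul_zero]
    exact (bernoulliExpect_const p 0).symm.le.trans
      (bernoulliExpect_mono hp fun B => bestSum_nonneg _ _ _)
  -- `v = v' + θ • 1_A` with `θ = min_A v`, and the support of `v'` misses `t₀`
  obtain ⟨t₀, ht₀, hmin⟩ := A.exists_min_image v hA
  set θ := v t₀
  set v' : ι → ℝ := fun t => v t - if t ∈ A then θ else 0
  have hv' : ∀ t, 0 ≤ v' t := fun t => by
    by_cases ht : t ∈ A
    · simpa [v', ht] using hmin t ht
    · simpa [v', ht] using hv t
  have hv'A : ∀ t ∉ A.erase t₀, v' t = 0 := fun t ht => by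
    by_cases htA : t ∈ A
    · obtain rfl : t = t₀ := by simpa [htA] using ht
      simp [v', htA, θ]
    · simp [v', htA, hvA t htA]
  have hsplit : ∑ t, v t * z t = ∑ t, v' t * z t + θ * ∑ t ∈ A, z t := by
    simp only [v', sub_mul, sum_sub_distrib, ite_mul, zero_mul, sum_ite_mem, univ_inter,
      mul_sum]
    ring
  have hlayer : ∀ B : Finset α, bestSum (univ.filter fun t => emb t ∈ B) K v' +
      θ * min (#((univ.filter fun t => emb t ∈ B) ∩ A) : ℝ) K ≤
        bestSum (univ.filter fun t => emb t ∈ B) K v := fun B => by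
    simpa [v'] using bestSum_add_mul_min_le (univ.filter fun t => emb t ∈ B) K v' θ hv'
      (fun t ht => hv'A t fun h => ht (mem_of_mem_erase h))
  calc (1 - (exp 1)⁻¹) * ∑ t, v t * z t
      = (1 - (exp 1)⁻¹) * ∑ t, v' t * z t + θ * ((1 - (exp 1)⁻¹) * ∑ t ∈ A, z t) := by
        rw [hsplit]; ring
    _ ≤ bernoulliExpect p (fun B => bestSum (univ.filter fun t => emb t ∈ B) K v') +
          θ * bernoulliExpect p
            (fun B => min (#((univ.filter fun t => emb t ∈ B) ∩ A) : ℝ) K) :=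
        add_le_add (ih _ (erase_ssubset ht₀) v' hv' hv'A) (mul_le_mul_of_nonneg_left
          (one_sub_inv_exp_mul_sum_le_bernoulliExpect_min_card hp hemb hz hzp hzK A) (hv t₀))
    _ ≤ bernoulliExpect p (fun B => bestSum (univ.filter fun t => emb t ∈ B) K v) := by
        rw [← bernoulliExpect_const_mul, ← bernoulliExpect_add]
        exact bernoulliExpect_mono hp hlayer

end Rounding

section Model

open Finset Real

variable {I J : Type*}

def likeProb (φ1 : Arc I J → ℝ) (x : Finset (Arc I J)) (a : Arc I J) : ℝ :=
  if a ∈ x then φ1 a else 0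

theorem likeProb_mem_Icc {φ1 : Arc I J → ℝ} (hφ1 : ∀ a, 0 ≤ φ1 a ∧ φ1 a ≤ 1)
    (x : Finset (Arc I J)) (a : Arc I J) : 0 ≤ likeProb φ1 x a ∧ likeProb φ1 x a ≤ 1 := by
  unfold likeProb
  split_ifs
  exacts [hφ1 a, ⟨le_rfl, zero_le_one⟩]

theorem mul_ite_mem_eq_likeProb (φ1 : Arc I J → ℝ) (x : Finset (Arc I J)) (a : Arc I J) :
    φ1 a * (if a ∈ x then 1 else 0) = likeProb φ1 x a := by
  simp only [likeProb, mul_ite, mul_one, mul_zero]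

variable [Fintype I] [Fintype J]

theorem sum_arc (f : Arc I J → ℝ) :
    ∑ a, f a = ∑ i, ∑ j, f (Sum.inl (i, j)) + ∑ j, ∑ i, f (Sum.inr (j, i)) := by
  rw [Fintype.sum_sum_type, Fintype.sum_prod_type, Fintype.sum_prod_type]

theorem M2_eq_sum_bernoulliExpect (φ1 φ2 : Arc I J → ℝ) (K : I ⊕ J → ℕ)
    (x : Finset (Arc I J)) :
    M2 φ1 φ2 K x =
      ∑ i, bernoulliExpect (likeProb φ1 x)
          (fun B => bestSum (backlogI B i) (K (Sum.inl i)) fun j => φ2 (Sum.inl (i, j))) +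
        ∑ j, bernoulliExpect (likeProb φ1 x)
          (fun B => bestSum (backlogJ B j) (K (Sum.inr j)) fun i => φ2 (Sum.inr (j, i))) := by
  have hprob : ∀ B, probOf φ1 x B = bernoulliWeight (likeProb φ1 x) B := fun B => by
    simp only [probOf, bernoulliWeight, likeProb]
  rw [← bernoulliExpect_sum, ← bernoulliExpect_sum, ← bernoulliExpect_add, M2, bernoulliExpect]
  exact sum_congr rfl fun B _ => by rw [hprob, mul_comm, fval]

theorem exists_DHfeas_sum_mul_eq_M2 {φ1 : Arc I J → ℝ} (φ2 : Arc I J → ℝ)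
    (hφ1 : ∀ a, 0 ≤ φ1 a ∧ φ1 a ≤ 1) (K : I ⊕ J → ℕ) {x : Finset (Arc I J)}
    {w : Finset (I × J)} (hxw : R1mem K x w) :
    ∃ y, DHfeas φ1 K x w y ∧ ∑ a, φ2 a * y a = M2 φ1 φ2 K x := by
  choose zI hzI hzIp hzIK hzIv using fun i : I =>
    exists_sum_mul_eq_bernoulliExpect_bestSum (likeProb_mem_Icc hφ1 x)
      (fun j : J => (Sum.inr (j, i) : Arc I J)) (K (Sum.inl i)) fun j => φ2 (Sum.inl (i, j))
  choose zJ hzJ hzJp hzJK hzJv using fun j : J =>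
    exists_sum_mul_eq_bernoulliExpect_bestSum (likeProb_mem_Icc hφ1 x)
      (fun i : I => (Sum.inl (i, j) : Arc I J)) (K (Sum.inr j)) fun i => φ2 (Sum.inr (j, i))
  let y : Arc I J → ℝ
    | Sum.inl (i, j) => zI i j
    | Sum.inr (j, i) => zJ j i
  refine ⟨y, ⟨?_, ?_, hxw, ?_⟩, ?_⟩
  · rintro (⟨i, j⟩ | ⟨j, i⟩)
    exacts [hzI i j, hzJ j i]
  · rintro (⟨i, j⟩ | ⟨j, i⟩) <;> rw [mul_ite_mem_eq_likeProb]
    exacts [hzIp i j, hzJp j i]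
  · rintro (i | j)
    exacts [hzIK i, hzJK j]
  · rw [sum_arc, M2_eq_sum_bernoulliExpect]
    exact congrArg₂ (· + ·) (sum_congr rfl fun i _ => hzIv i) (sum_congr rfl fun j _ => hzJv j)

theorem one_sub_inv_exp_mul_sum_le_M2 {φ1 φ2 : Arc I J → ℝ}
    (hφ1 : ∀ a, 0 ≤ φ1 a ∧ φ1 a ≤ 1) (hφ2 : ∀ a, 0 ≤ φ2 a ∧ φ2 a ≤ 1) {K : I ⊕ J → ℕ}
    {x : Finset (Arc I J)} {w : Finset (I × J)} {y : Arc I J → ℝ} (hy : DHfeas φ1 K x w y) :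
    (1 - (exp 1)⁻¹) * ∑ a, φ2 a * y a ≤ M2 φ1 φ2 K x := by
  obtain ⟨hy01, hyp, -, hyK⟩ := hy
  have hyp' : ∀ a, y a ≤ likeProb φ1 x (arcRev a) := fun a => by
    simpa only [mul_ite_mem_eq_likeProb] using hyp a
  rw [sum_arc, M2_eq_sum_bernoulliExpect, mul_add, mul_sum, mul_sum]
  refine add_le_add (sum_le_sum fun i _ => ?_) (sum_le_sum fun j _ => ?_)
  · exact one_sub_inv_exp_mul_sum_le_bernoulliExpect_bestSum (emb := fun j => Sum.inr (j, i))
      (likeProb_mem_Icc hφ1 x) (fun _ _ h => by simpa using h) (fun j => (hy01 _).1)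
      (fun j => hyp' (Sum.inl (i, j))) (hyK (Sum.inl i)) _ fun j => (hφ2 _).1
  · exact one_sub_inv_exp_mul_sum_le_bernoulliExpect_bestSum (emb := fun i => Sum.inl (i, j))
      (likeProb_mem_Icc hφ1 x) (fun _ _ h => by simpa using h) (fun i => (hy01 _).1)
      (fun i => hyp' (Sum.inr (j, i))) (hyK (Sum.inr j)) _ fun i => (hφ2 _).1

theorem M1_nonneg {φ1 : Arc I J → ℝ} (hφ1 : ∀ a, 0 ≤ φ1 a ∧ φ1 a ≤ 1) (w : Finset (I × J)) :
    0 ≤ M1 φ1 w :=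
  sum_nonneg fun _ _ => mul_nonneg (hφ1 _).1 (hφ1 _).1

end Model

/-- the Dating Heuristic achieves a `1 - 1/e` approximation guarantee:
if `(x*, w*, y*)` is an optimal solution of the DH relaxation, then the expected number
of matches obtained by displaying `(x*, w*)` in the first period (followed by optimal
second-period responses) is at least `1 - 1/e` times the optimum over `R¹`. -/
theorem DH_guarantee
    {I J : Type*} [Fintype I] [Fintype J]
    (φ1 φ2 : Arc I J → ℝ)
    (hφ1 : ∀ a, 0 ≤ φ1 a ∧ φ1 a ≤ 1) (hφ2 : ∀ a, 0 ≤ φ2 a ∧ φ2 a ≤ 1)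
    (K : I ⊕ J → ℕ)
    (xs : Finset (Arc I J)) (ws : Finset (I × J)) (ys : Arc I J → ℝ)
    (hfeas : DHfeas φ1 K xs ws ys)
    (hopt : ∀ (x : Finset (Arc I J)) (w : Finset (I × J)) (y : Arc I J → ℝ),
      DHfeas φ1 K x w y →
      M1 φ1 w + ∑ a : Arc I J, φ2 a * y a ≤
        M1 φ1 ws + ∑ a : Arc I J, φ2 a * ys a) :
    ∀ (x : Finset (Arc I J)) (w : Finset (I × J)), R1mem K x w →
      (1 - (Real.exp 1)⁻¹) * (M1 φ1 w + M2 φ1 φ2 K x) ≤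
        M1 φ1 ws + M2 φ1 φ2 K xs := by
  intro x w hxw
  obtain ⟨y, hy, hyM2⟩ := exists_DHfeas_sum_mul_eq_M2 φ2 hφ1 K hxw
  have hrelax : M1 φ1 w + M2 φ1 φ2 K x ≤ M1 φ1 ws + ∑ a, φ2 a * ys a :=
    hyM2 ▸ hopt x w y hy
  have hc1 : 1 - (Real.exp 1)⁻¹ ≤ 1 := sub_le_self _ (inv_nonneg.2 (Real.exp_pos 1).le)
  calc (1 - (Real.exp 1)⁻¹) * (M1 φ1 w + M2 φ1 φ2 K x)
      ≤ (1 - (Real.exp 1)⁻¹) * M1 φ1 ws + (1 - (Real.exp 1)⁻¹) * ∑ a, φ2 a * ys a := by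
        rw [← mul_add]; exact mul_le_mul_of_nonneg_left hrelax one_sub_inv_exp_one_nonneg
    _ ≤ M1 φ1 ws + M2 φ1 φ2 K xs :=
        add_le_add (mul_le_of_le_one_left (M1_nonneg hφ1 ws) hc1)
          (one_sub_inv_exp_mul_sum_le_M2 hφ1 hφ2 hfeas)
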